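/- Let X be a finite metric space with pairwise distinct distances (for distinct 2-element subsets e ≠ e′, diam e ≠ diam e′), and let ≤ be a linear order on the nonempty subsets of X extending the face relation and refining the diameter order (diam σ < diam τ implies σ < τ). Let E be the set of 2-element subsets and T the set of 3-element subsets of X, each linearly ordered by ≤. Let D be the E × T matrix over the two-element field 𝔽₂ with D_{σ τ} = 1 if and only if σ ⊂ τ, let V be a regular upper triangular T × T matrix over 𝔽₂, and suppose R = D·V is reduced. Then for every σ ∈ E and τ ∈ T: R_τ ≠ 0 with pivot index σ and diam σ = diam τ, if and only if (σ, τ) is an apparent pair of ≤ (σ is the maximum facet of τ and τ is the minimum cofacet of σ). In other words, among the persistence pairs in dimension 1, the zero persistence pairs are precisely the apparent pairs. -/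

import Mathlib

/-- The diameter of a finite subset of a metric space. -/
noncomputable def fdiam {X : Type*} [MetricSpace X] (S : Finset X) : ℝ :=
  Metric.diam (S : Set X)

/-- `i` is the pivot index (with respect to the order `le` on row indices) of
the `j`-th column of `M`: the entry `M i j` is nonzero and every other row
index carrying a nonzero entry in column `j` is `le`-below `i`.
In particular the column is nonzero. -/
def IsPivotLe {I J F : Type*} [Zero F] (le : I → I → Prop)
    (M : Matrix I J F) (i : I) (j : J) : Prop :=
  M i j ≠ 0 ∧ ∀ i' : I, M i' j ≠ 0 → le i' i

/-!
Since all edge lengths are distinct, an edge `σ` with `diam σ = diam τ ⊇ σ` is the unique longest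
edge of `τ`, hence its maximal facet. For an apparent pair `(σ, τ)` the other cofacets of `σ` come
after `τ`, so upper triangularity of `V` makes `R_{στ} = V_{ττ} ≠ 0`; every edge hit by column `τ`
lies in a triangle not after `τ`, so it is no longer than `σ`, and `σ` is the pivot. Conversely, if
`σ` is the pivot of `R_τ` with `diam σ = diam τ`, some triangle `ρ ⊇ σ` before `τ` has the diameter
of `σ`, hence so does the minimal cofacet `τ₀` of `σ`. Then `(σ, τ₀)` is apparent, so `σ` is also
the pivot of `R_{τ₀}`, and reducedness forces `τ = τ₀`.
-/

open Finset

theorem Finset.nonempty_of_card_eq_succ {α : Type*} {s : Finset α} {n : ℕ} (h : s.card = n + 1) :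
    s.Nonempty :=
  card_ne_zero.1 (by omega)

section Diameter

variable {X : Type*} [MetricSpace X]

theorem fdiam_nonneg (s : Finset X) : 0 ≤ fdiam s := Metric.diam_nonneg

theorem fdiam_mono {s t : Finset X} (h : s ⊆ t) : fdiam s ≤ fdiam t :=
  Metric.diam_mono (by exact_mod_cast h) t.finite_toSet.isBounded

theorem fdiam_pair [DecidableEq X] (x y : X) : fdiam ({x, y} : Finset X) = dist x y := by
  rw [fdiam, coe_pair, Metric.diam_pair]

theorem fdiam_le_of_forall_card_eq_two [DecidableEq X] {t : Finset X} {c : ℝ} (hc : 0 ≤ c)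
    (h : ∀ e ⊆ t, e.card = 2 → fdiam e ≤ c) : fdiam t ≤ c := by
  refine Metric.diam_le_of_forall_dist_le hc fun x hx y hy => ?_
  rcases eq_or_ne x y with rfl | hxy
  · simpa using hc
  · rw [← fdiam_pair]
    exact h _ (insert_subset_iff.2 ⟨hx, singleton_subset_iff.2 hy⟩) (card_pair hxy)

end Diameter

namespace Matrix

variable {I J K R : Type*}

theorem mul_apply_eq_sum_filter [Fintype J] [NonAssocSemiring R] (r : I → J → Prop)
    [∀ i j, Decidable (r i j)] {D : Matrix I J R} (hD : ∀ i j, D i j = if r i j then 1 else 0)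
    (V : Matrix J K R) (i : I) (k : K) : (D * V) i k = ∑ j with r i j, V j k := by
  simp [mul_apply, hD, sum_filter]

theorem exists_of_mul_apply_ne_zero [Fintype J] [NonAssocSemiring R] {r : I → J → Prop}
    [∀ i j, Decidable (r i j)] {D : Matrix I J R} (hD : ∀ i j, D i j = if r i j then 1 else 0)
    {V : Matrix J K R} {i : I} {k : K} (h : (D * V) i k ≠ 0) : ∃ j, r i j ∧ V j k ≠ 0 := by
  rw [mul_apply_eq_sum_filter r hD] at h
  obtain ⟨j, hj, hjk⟩ := exists_ne_zero_of_sum_ne_zero h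
  exact ⟨j, (mem_filter.1 hj).2, hjk⟩

theorem IsUpperTriangular.diag_ne_zero [Fintype I] [DecidableEq I] [LinearOrder I] [CommRing R]
    [Nontrivial R] {M : Matrix I I R} (h : M.IsUpperTriangular) (hM : IsUnit M) (i : I) :
    M i i ≠ 0 := by
  have hdet := (isUnit_iff_isUnit_det M).1 hM
  rw [det_of_isUpperTriangular h] at hdet
  exact fun hi => hdet.ne_zero (prod_eq_zero (mem_univ i) hi)

end Matrix

section Filtration

variable {X : Type*} [MetricSpace X]

structure IsDiamRefiningOrder (le : Finset X → Finset X → Prop) : Prop where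
  refl : ∀ σ : Finset X, σ.Nonempty → le σ σ
  trans : ∀ σ τ ρ : Finset X, σ.Nonempty → τ.Nonempty → ρ.Nonempty → le σ τ → le τ ρ → le σ ρ
  antisymm : ∀ σ τ : Finset X, σ.Nonempty → τ.Nonempty → le σ τ → le τ σ → σ = τ
  total : ∀ σ τ : Finset X, σ.Nonempty → τ.Nonempty → le σ τ ∨ le τ σ
  lt_of_fdiam_lt : ∀ σ τ : Finset X, σ.Nonempty → τ.Nonempty →
    fdiam σ < fdiam τ → le σ τ ∧ ¬ le τ σ

def IsApparentPair (le : Finset X → Finset X → Prop) (σ τ : Finset X) : Prop :=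
  σ ⊆ τ ∧ (∀ σ' : Finset X, σ'.Nonempty → σ' ⊆ τ → τ.card = σ'.card + 1 → le σ' σ) ∧
    (∀ τ' : Finset X, σ ⊆ τ' → τ'.card = σ.card + 1 → le τ τ')

namespace IsDiamRefiningOrder

variable {le : Finset X → Finset X → Prop}

/-- Not an instance: subtypes of `Finset X` already carry the inclusion order. -/
noncomputable abbrev linearOrder (hle : IsDiamRefiningOrder le) (p : Finset X → Prop)
    (hp : ∀ s, p s → s.Nonempty) : LinearOrder {s // p s} where
  le a b := le a.1 b.1
  lt a b := le a.1 b.1 ∧ ¬ le b.1 a.1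
  lt_iff_le_not_ge _ _ := Iff.rfl
  le_refl a := hle.refl a.1 (hp _ a.2)
  le_trans a b c := hle.trans a.1 b.1 c.1 (hp _ a.2) (hp _ b.2) (hp _ c.2)
  le_antisymm a b hab hba := Subtype.ext (hle.antisymm a.1 b.1 (hp _ a.2) (hp _ b.2) hab hba)
  le_total a b := hle.total a.1 b.1 (hp _ a.2) (hp _ b.2)
  toDecidableLE := Classical.decRel _

theorem fdiam_le (hle : IsDiamRefiningOrder le) {s t : Finset X} (hs : s.Nonempty)
    (ht : t.Nonempty) (h : le s t) : fdiam s ≤ fdiam t :=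
  not_lt.1 fun hlt => (hle.lt_of_fdiam_lt t s ht hs hlt).2 h

theorem le_of_fdiam_le (hle : IsDiamRefiningOrder le)
    (hdist : ∀ e e' : Finset X, e.card = 2 → e'.card = 2 → e ≠ e' → fdiam e ≠ fdiam e')
    {σ σ' : Finset X} (hσ : σ.card = 2) (hσ' : σ'.card = 2) (h : fdiam σ' ≤ fdiam σ) :
    le σ' σ := by
  rcases eq_or_ne σ' σ with rfl | hne
  · exact hle.refl σ' (nonempty_of_card_eq_succ hσ')
  · exact (hle.lt_of_fdiam_lt σ' σ (nonempty_of_card_eq_succ hσ') (nonempty_of_card_eq_succ hσ)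
      (h.lt_of_ne (hdist σ' σ hσ' hσ hne))).1

theorem le_of_ne_zero {R : Type*} [Zero R] (hle : IsDiamRefiningOrder le) {k : ℕ}
    {V : Matrix {s : Finset X // s.card = k + 1} {s : Finset X // s.card = k + 1} R}
    (hVut : ∀ t₁ t₂ : {s : Finset X // s.card = k + 1}, t₁ ≠ t₂ → le t₂.1 t₁.1 → V t₁ t₂ = 0)
    {ρ t : {s : Finset X // s.card = k + 1}} (h : V ρ t ≠ 0) : le ρ.1 t.1 := by
  rcases eq_or_ne ρ t with rfl | hne
  · exact hle.refl ρ.1 (nonempty_of_card_eq_succ ρ.2)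
  · exact (hle.total ρ.1 t.1 (nonempty_of_card_eq_succ ρ.2)
      (nonempty_of_card_eq_succ t.2)).resolve_right fun htρ => h (hVut ρ t hne htρ)

theorem diag_ne_zero {R : Type*} [CommRing R] [Nontrivial R] [Fintype X] [DecidableEq X]
    (hle : IsDiamRefiningOrder le) {k : ℕ}
    {V : Matrix {s : Finset X // s.card = k + 1} {s : Finset X // s.card = k + 1} R}
    (hV : IsUnit V)
    (hVut : ∀ t₁ t₂ : {s : Finset X // s.card = k + 1}, t₁ ≠ t₂ → le t₂.1 t₁.1 → V t₁ t₂ = 0)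
    (t : {s : Finset X // s.card = k + 1}) : V t t ≠ 0 := by
  refine @Matrix.IsUpperTriangular.diag_ne_zero _ _ _ _
    (hle.linearOrder (·.card = k + 1) fun _ hs => nonempty_of_card_eq_succ hs) _ _ V
    (fun t₁ t₂ hlt => ?_) hV t
  exact hVut t₁ t₂ (by rintro rfl; exact hlt.2 hlt.1) hlt.1

end IsDiamRefiningOrder

theorem IsApparentPair.fdiam_eq [DecidableEq X] {le : Finset X → Finset X → Prop}
    (hle : IsDiamRefiningOrder le) {σ τ : Finset X} (hσ : σ.card = 2) (hτ : τ.card = 3)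
    (h : IsApparentPair le σ τ) : fdiam σ = fdiam τ :=
  le_antisymm (fdiam_mono h.1) <| fdiam_le_of_forall_card_eq_two (fdiam_nonneg σ)
    fun e he he2 => hle.fdiam_le (nonempty_of_card_eq_succ he2) (nonempty_of_card_eq_succ hσ)
      (h.2.1 e (nonempty_of_card_eq_succ he2) he (by omega))

end Filtration

section BoundaryMatrix

variable {X : Type*} [Fintype X] [DecidableEq X] [MetricSpace X] {le : Finset X → Finset X → Prop}
  {D : Matrix {e : Finset X // e.card = 2} {t : Finset X // t.card = 3} (ZMod 2)}
  {V : Matrix {t : Finset X // t.card = 3} {t : Finset X // t.card = 3} (ZMod 2)}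

namespace IsDiamRefiningOrder

theorem exists_isApparentPair (hle : IsDiamRefiningOrder le)
    (hdist : ∀ e e' : Finset X, e.card = 2 → e'.card = 2 → e ≠ e' → fdiam e ≠ fdiam e')
    {σ : {e : Finset X // e.card = 2}} {ρ : {t : Finset X // t.card = 3}} (hσρ : σ.1 ⊆ ρ.1)
    (hρ : fdiam ρ.1 ≤ fdiam σ.1) :
    ∃ τ : {t : Finset X // t.card = 3}, IsApparentPair le σ.1 τ.1 := by
  obtain ⟨τ, hτ, hτmin⟩ :=
    @exists_min_image _ _ (hle.linearOrder (·.card = 3) fun _ hs => nonempty_of_card_eq_succ hs)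
      {t | σ.1 ⊆ t.1} id ⟨ρ, by simpa using hσρ⟩
  have hστ : σ.1 ⊆ τ.1 := by simpa using hτ
  have hmin : ∀ τ' : Finset X, σ.1 ⊆ τ' → τ'.card = σ.1.card + 1 → le τ.1 τ' :=
    fun τ' hστ' hcard => hτmin ⟨τ', by rw [hcard, σ.2]⟩ (by simpa using hστ')
  have hτσ : fdiam τ.1 ≤ fdiam σ.1 :=
    (hle.fdiam_le (nonempty_of_card_eq_succ τ.2) (nonempty_of_card_eq_succ ρ.2)
      (hmin ρ.1 hσρ (by rw [σ.2, ρ.2]))).trans hρ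
  refine ⟨τ, hστ, fun σ' _ hσ'τ hcard => ?_, hmin⟩
  exact hle.le_of_fdiam_le hdist σ.2 (by omega) ((fdiam_mono hσ'τ).trans hτσ)

theorem isPivotLe_of_isApparentPair (hle : IsDiamRefiningOrder le)
    (hdist : ∀ e e' : Finset X, e.card = 2 → e'.card = 2 → e ≠ e' → fdiam e ≠ fdiam e')
    (hD : ∀ (e : {e : Finset X // e.card = 2}) (t : {t : Finset X // t.card = 3}),
      D e t = if e.1 ⊆ t.1 then 1 else 0)
    (hV : IsUnit V)
    (hVut : ∀ t₁ t₂ : {t : Finset X // t.card = 3}, t₁ ≠ t₂ → le t₂.1 t₁.1 → V t₁ t₂ = 0)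
    {σ : {e : Finset X // e.card = 2}} {τ : {t : Finset X // t.card = 3}}
    (h : IsApparentPair le σ.1 τ.1) : IsPivotLe (fun a b => le a.1 b.1) (D * V) σ τ := by
  refine ⟨?_, fun σ' hσ' => ?_⟩
  · rw [Matrix.mul_apply_eq_sum_filter _ hD, sum_eq_single_of_mem τ (by simpa using h.1)]
    · exact hle.diag_ne_zero hV hVut τ
    · intro ρ hρ hne
      exact hVut ρ τ hne (h.2.2 ρ.1 (by simpa using hρ) (by rw [σ.2, ρ.2]))
  · obtain ⟨ρ, hσ'ρ, hρτ⟩ := Matrix.exists_of_mul_apply_ne_zero hD hσ'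
    refine hle.le_of_fdiam_le hdist σ.2 σ'.2 ?_
    calc fdiam σ'.1 ≤ fdiam ρ.1 := fdiam_mono hσ'ρ
      _ ≤ fdiam τ.1 := hle.fdiam_le (nonempty_of_card_eq_succ ρ.2) (nonempty_of_card_eq_succ τ.2)
          (hle.le_of_ne_zero hVut hρτ)
      _ = fdiam σ.1 := (IsApparentPair.fdiam_eq hle σ.2 τ.2 h).symm

end IsDiamRefiningOrder

end BoundaryMatrix

theorem stmt12_general {X : Type*} [Fintype X] [DecidableEq X] [MetricSpace X]
    (hdist : ∀ e e' : Finset X, e.card = 2 → e'.card = 2 → e ≠ e' →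
      fdiam e ≠ fdiam e')
    (le : Finset X → Finset X → Prop)
    (hrefl : ∀ σ : Finset X, σ.Nonempty → le σ σ)
    (htrans : ∀ σ τ ρ : Finset X, σ.Nonempty → τ.Nonempty → ρ.Nonempty →
      le σ τ → le τ ρ → le σ ρ)
    (hantisymm : ∀ σ τ : Finset X, σ.Nonempty → τ.Nonempty → le σ τ → le τ σ → σ = τ)
    (htotal : ∀ σ τ : Finset X, σ.Nonempty → τ.Nonempty → le σ τ ∨ le τ σ)
    (hdiam : ∀ σ τ : Finset X, σ.Nonempty → τ.Nonempty →
      fdiam σ < fdiam τ → le σ τ ∧ ¬ le τ σ)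
    (D : Matrix {e : Finset X // e.card = 2} {t : Finset X // t.card = 3} (ZMod 2))
    (hD : ∀ (e : {e : Finset X // e.card = 2}) (t : {t : Finset X // t.card = 3}),
      D e t = if e.1 ⊆ t.1 then 1 else 0)
    (V : Matrix {t : Finset X // t.card = 3} {t : Finset X // t.card = 3} (ZMod 2))
    (hV : IsUnit V)
    (hVut : ∀ t₁ t₂ : {t : Finset X // t.card = 3}, t₁ ≠ t₂ → le t₂.1 t₁.1 →
      V t₁ t₂ = 0)
    (hred : ∀ (t₁ t₂ : {t : Finset X // t.card = 3}) (e : {e : Finset X // e.card = 2}),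
      IsPivotLe (fun a b => le a.1 b.1) (D * V) e t₁ →
      IsPivotLe (fun a b => le a.1 b.1) (D * V) e t₂ → t₁ = t₂) :
    ∀ (σ : {e : Finset X // e.card = 2}) (τ : {t : Finset X // t.card = 3}),
      (IsPivotLe (fun a b => le a.1 b.1) (D * V) σ τ ∧ fdiam σ.1 = fdiam τ.1) ↔
      (σ.1 ⊆ τ.1 ∧
       (∀ σ' : Finset X, σ'.Nonempty → σ' ⊆ τ.1 → τ.1.card = σ'.card + 1 → le σ' σ.1) ∧
       (∀ τ' : Finset X, σ.1 ⊆ τ' → τ'.card = σ.1.card + 1 → le τ.1 τ')) := by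
  intro σ τ
  have hle : IsDiamRefiningOrder le := ⟨hrefl, htrans, hantisymm, htotal, hdiam⟩
  refine ⟨fun ⟨hpiv, hστ⟩ => ?_, fun h => ⟨hle.isPivotLe_of_isApparentPair hdist hD hV hVut h,
    IsApparentPair.fdiam_eq hle σ.2 τ.2 h⟩⟩
  obtain ⟨ρ, hσρ, hρτ⟩ := Matrix.exists_of_mul_apply_ne_zero hD hpiv.1
  have hρ : fdiam ρ.1 ≤ fdiam σ.1 :=
    hστ ▸ hle.fdiam_le (nonempty_of_card_eq_succ ρ.2) (nonempty_of_card_eq_succ τ.2)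
      (hle.le_of_ne_zero hVut hρτ)
  obtain ⟨τ₀, hτ₀⟩ := hle.exists_isApparentPair hdist hσρ hρ
  obtain rfl := hred τ τ₀ σ hpiv (hle.isPivotLe_of_isApparentPair hdist hD hV hVut hτ₀)
  exact hτ₀

/-- Let `X` be a finite metric space with pairwise distinct distances, `le` a
linear order on the nonempty subsets of `X` extending the face relation and
refining the diameter order, `D` the filtration 2-boundary matrix over `𝔽₂`
(rows: edges `E`, columns: triangles `T`), `V` a regular upper triangular
`T × T` matrix, and `R = D·V` reduced. Then `R_τ ≠ 0` with pivot index `σ` and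
`diam σ = diam τ` if and only if `(σ, τ)` is an apparent pair of `le`:
among the persistence pairs in dimension 1, the zero persistence pairs are
precisely the apparent pairs. -/
theorem stmt12 {X : Type*} [Fintype X] [DecidableEq X] [MetricSpace X]
    (hdist : ∀ e e' : Finset X, e.card = 2 → e'.card = 2 → e ≠ e' →
      fdiam e ≠ fdiam e')
    (le : Finset X → Finset X → Prop)
    (hrefl : ∀ σ : Finset X, σ.Nonempty → le σ σ)
    (htrans : ∀ σ τ ρ : Finset X, σ.Nonempty → τ.Nonempty → ρ.Nonempty →
      le σ τ → le τ ρ → le σ ρ)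
    (hantisymm : ∀ σ τ : Finset X, σ.Nonempty → τ.Nonempty → le σ τ → le τ σ → σ = τ)
    (htotal : ∀ σ τ : Finset X, σ.Nonempty → τ.Nonempty → le σ τ ∨ le τ σ)
    (hface : ∀ σ τ : Finset X, σ.Nonempty → τ.Nonempty → σ ⊆ τ → le σ τ)
    (hdiam : ∀ σ τ : Finset X, σ.Nonempty → τ.Nonempty →
      fdiam σ < fdiam τ → le σ τ ∧ ¬ le τ σ)
    (D : Matrix {e : Finset X // e.card = 2} {t : Finset X // t.card = 3} (ZMod 2))
    (hD : ∀ (e : {e : Finset X // e.card = 2}) (t : {t : Finset X // t.card = 3}),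
      D e t = if e.1 ⊆ t.1 then 1 else 0)
    (V : Matrix {t : Finset X // t.card = 3} {t : Finset X // t.card = 3} (ZMod 2))
    (hV : IsUnit V)
    (hVut : ∀ t₁ t₂ : {t : Finset X // t.card = 3}, t₁ ≠ t₂ → le t₂.1 t₁.1 →
      V t₁ t₂ = 0)
    (hred : ∀ (t₁ t₂ : {t : Finset X // t.card = 3}) (e : {e : Finset X // e.card = 2}),
      IsPivotLe (fun a b => le a.1 b.1) (D * V) e t₁ →
      IsPivotLe (fun a b => le a.1 b.1) (D * V) e t₂ → t₁ = t₂) :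
    ∀ (σ : {e : Finset X // e.card = 2}) (τ : {t : Finset X // t.card = 3}),
      (IsPivotLe (fun a b => le a.1 b.1) (D * V) σ τ ∧ fdiam σ.1 = fdiam τ.1) ↔
      (σ.1 ⊆ τ.1 ∧
       (∀ σ' : Finset X, σ'.Nonempty → σ' ⊆ τ.1 → τ.1.card = σ'.card + 1 → le σ' σ.1) ∧
       (∀ τ' : Finset X, σ.1 ⊆ τ' → τ'.card = σ.1.card + 1 → le τ.1 τ')) :=
  stmt12_general hdist le hrefl htrans hantisymm htotal hdiam D hD V hV hVut hred
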